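/- For every 2-connected graph G on n vertices, the Harary index H(G) is at least H(C_n), with equality if and only if G ≅ C_n. -/

import Mathlib

open SimpleGraph Finset

/-- Wiener index: sum of distances over unordered pairs of vertices. -/
noncomputable def wienerIndex {n : ℕ} (G : SimpleGraph (Fin n)) : ℕ :=
  ∑ p ∈ Finset.univ.filter (fun p : Fin n × Fin n => p.1 < p.2), G.dist p.1 p.2

/-- Harary index: sum of reciprocal distances over unordered pairs of vertices. -/
noncomputable def hararyIndex {n : ℕ} (G : SimpleGraph (Fin n)) : ℝ :=
  ∑ p ∈ Finset.univ.filter (fun p : Fin n × Fin n => p.1 < p.2), (1 : ℝ) / (G.dist p.1 p.2)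

/-- A graph is Eulerian if it is connected and every vertex has even degree. -/
def IsEulerian {n : ℕ} (G : SimpleGraph (Fin n)) [DecidableRel G.Adj] : Prop :=
  G.Connected ∧ ∀ v, Even (G.degree v)

/-- A graph is 2-edge-connected if it is connected and remains connected
after the deletion of any single edge. -/
def TwoEdgeConnected {n : ℕ} (G : SimpleGraph (Fin n)) : Prop :=
  G.Connected ∧ ∀ e ∈ G.edgeSet, (G.deleteEdges {e}).Connected

/-- A graph is 2-connected if it has at least 3 vertices and deleting any
single vertex leaves it connected (no cutvertex). -/
def TwoConnected {n : ℕ} (G : SimpleGraph (Fin n)) : Prop :=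
  3 ≤ n ∧ G.Connected ∧
    ∀ v : Fin n, ((⊤ : G.Subgraph).deleteVerts {v}).coe.Connected

/-!
Write `R(v) = ∑ u, 1 / d(v, u)`. Since `1 / d = 1 - ∑_{1 ≤ i < d} (1 / i - 1 / (i + 1))`, `R(v)`
is `n - 1` minus a nonnegative combination of the counts `#{u | i < d(v, u)}`, `i ≥ 1`. In a
2-connected graph every sphere around `v` of radius `1 ≤ j < ecc(v)` has at least two vertices (a
single one would separate `v` from the farther vertices), so a nonzero count is at most
`n - (2i + 1)`. In a connected graph of maximum degree `2`, such as `C_n`, every sphere of positive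
radius has at most two vertices, so the count is at least `n - (2i + 1)`. Hence
`R_G(v) ≥ R_{C_n}(v)` for every `v`. Equality forces the counts for `i = 1` to agree, i.e. every
vertex of `G` has degree `2`, and a connected `2`-regular graph on `n` vertices is `C_n`.
-/

section ReciprocalSums

lemma sum_Ico_one_div_sub_one_div {d : ℕ} (hd : 0 < d) :
    ∑ i ∈ Ico 1 d, ((1 : ℝ) / i - 1 / (i + 1)) = 1 - 1 / d := by
  have := Finset.sum_Ico_sub (fun i : ℕ => (1 : ℝ) / i) hd
  push_cast at this
  rw [one_div_one] at this
  rw [← neg_sub, ← this, ← Finset.sum_neg_distrib]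
  simp

lemma one_div_eq_sub_sum_Ico {d N : ℕ} (hdN : d ≤ N) :
    (1 : ℝ) / d = (if 0 < d then 1 else 0) -
      ∑ i ∈ Ico 1 N, if i < d then (1 : ℝ) / i - 1 / (i + 1) else 0 := by
  rw [← Finset.sum_filter]
  rcases d.eq_zero_or_pos with rfl | hd
  · simp
  · have : {i ∈ Ico 1 N | i < d} = Ico 1 d := by ext i; simp; omega
    rw [this, sum_Ico_one_div_sub_one_div hd, if_pos hd]
    ring

variable {α : Type*} [Fintype α]

lemma sum_one_div_eq_sub_sum_card {d : α → ℕ} {N : ℕ} (hd : ∀ x, d x ≤ N) :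
    ∑ x, (1 : ℝ) / d x = #{x | 0 < d x} -
      ∑ i ∈ Ico 1 N, ((1 : ℝ) / i - 1 / (i + 1)) * #{x | i < d x} := by
  simp_rw [one_div_eq_sub_sum_Ico (hd _), Finset.sum_sub_distrib, Finset.sum_boole]
  rw [Finset.sum_comm]
  simp_rw [← Finset.sum_filter, Finset.sum_const, nsmul_eq_mul, mul_comm]

lemma one_div_sub_one_div_succ_nonneg {i : ℕ} (hi : 0 < i) : 0 ≤ (1 : ℝ) / i - 1 / (i + 1) := by
  rw [sub_nonneg]
  gcongr
  linarith

variable {d d' : α → ℕ}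

lemma mul_card_lt_sub_card_lt_nonneg (h : ∀ i, #{x | i < d x} ≤ #{x | i < d' x}) {i : ℕ}
    (hi : 0 < i) :
    0 ≤ ((1 : ℝ) / i - 1 / (i + 1)) * (#{x | i < d' x} - #{x | i < d x}) :=
  mul_nonneg (one_div_sub_one_div_succ_nonneg hi) (sub_nonneg.2 (by exact_mod_cast h i))

variable {N : ℕ} (hd : ∀ x, d x ≤ N) (hd' : ∀ x, d' x ≤ N)
  (h0 : #{x | 0 < d x} = #{x | 0 < d' x})
include hd hd' h0

lemma sub_sum_one_div_eq :
    ∑ x, (1 : ℝ) / d x - ∑ x, (1 : ℝ) / d' x =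
      ∑ i ∈ Ico 1 N, ((1 : ℝ) / i - 1 / (i + 1)) * (#{x | i < d' x} - #{x | i < d x}) := by
  simp_rw [sum_one_div_eq_sub_sum_card hd, sum_one_div_eq_sub_sum_card hd', h0, mul_sub,
    Finset.sum_sub_distrib]
  ring

variable (h : ∀ i, #{x | i < d x} ≤ #{x | i < d' x})
include h

lemma sum_one_div_le_of_card_lt_le : ∑ x, (1 : ℝ) / d' x ≤ ∑ x, (1 : ℝ) / d x := by
  rw [← sub_nonneg, sub_sum_one_div_eq hd hd' h0]
  exact Finset.sum_nonneg fun i hi => mul_card_lt_sub_card_lt_nonneg h (Finset.mem_Ico.1 hi).1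

lemma card_one_lt_eq_of_sum_one_div_eq (heq : ∑ x, (1 : ℝ) / d' x = ∑ x, (1 : ℝ) / d x) :
    #{x | 1 < d x} = #{x | 1 < d' x} := by
  -- Enlarging `N` to `N + 2` puts the term `i = 1` into the sum.
  have hsum := sub_sum_one_div_eq (N := N + 2) (fun x => (hd x).trans (by omega))
    (fun x => (hd' x).trans (by omega)) h0
  rw [heq, sub_self, eq_comm, Finset.sum_eq_zero_iff_of_nonneg fun i hi =>
    mul_card_lt_sub_card_lt_nonneg h (Finset.mem_Ico.1 hi).1] at hsum
  have := hsum 1 (by simp)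
  norm_num [sub_eq_zero] at this
  exact_mod_cast this.symm

end ReciprocalSums

namespace SimpleGraph

variable {V : Type*} {G : SimpleGraph V}

lemma Walk.exists_mem_support_dist_eq {v a b : V} {j : ℕ} (p : G.Walk a b)
    (ha : G.dist v a < j) (hb : j ≤ G.dist v b) : ∃ x ∈ p.support, G.dist v x = j := by
  obtain ⟨d, hd, hfst, hsnd⟩ := p.exists_boundary_dart {x | G.dist v x < j} ha (by simpa using hb)
  refine ⟨d.snd, p.dart_snd_mem_support_of_mem_darts hd, ?_⟩
  have := d.adj.diff_dist_adj (u := v)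
  simp only [Set.mem_ofPred_eq, not_lt] at hfst hsnd
  omega

lemma exists_dist_eq_of_le {v u : V} {j : ℕ} (hj : j ≤ G.dist v u) : ∃ w, G.dist v w = j := by
  rcases j.eq_zero_or_pos with rfl | hj0
  · exact ⟨v, dist_self⟩
  · obtain ⟨p, -⟩ := exists_walk_of_dist_ne_zero (by omega : G.dist v u ≠ 0)
    obtain ⟨w, -, hw⟩ := p.exists_mem_support_dist_eq (by simpa using hj0) hj
    exact ⟨w, hw⟩

lemma exists_adj_dist_eq_of_dist_eq_succ {v u : V} {j : ℕ} (h : G.dist v u = j + 1) :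
    ∃ w, G.Adj w u ∧ G.dist v w = j := by
  obtain ⟨p, hp⟩ :=
    (Reachable.of_dist_ne_zero (by omega : G.dist v u ≠ 0)).exists_walk_length_eq_dist
  have hnil : ¬p.Nil := fun hn => by rw [← Walk.length_eq_zero_iff] at hn; omega
  refine ⟨p.penultimate, p.adj_penultimate hnil, ?_⟩
  have := dist_le p.dropLast
  have := Walk.length_dropLast_add_one hnil
  have := (p.adj_penultimate hnil).diff_dist_adj (u := v)
  omega

lemma Iso.dist_le {W : Type*} {H : SimpleGraph W} (e : G ≃g H) (u v : V) :
    H.dist (e u) (e v) ≤ G.dist u v := by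
  by_cases hr : G.Reachable u v
  · obtain ⟨p, hp⟩ := hr.exists_walk_length_eq_dist
    simpa [hp] using SimpleGraph.dist_le (p.map e.toHom)
  · simp [dist_eq_zero_of_not_reachable (Iso.reachable_iff.not.2 hr)]

lemma Iso.dist_eq {W : Type*} {H : SimpleGraph W} (e : G ≃g H) (u v : V) :
    H.dist (e u) (e v) = G.dist u v :=
  (e.dist_le u v).antisymm (by simpa using e.symm.dist_le (e u) (e v))

variable [Fintype V]

lemma dist_le_card (u v : V) : G.dist u v ≤ Fintype.card V := by
  by_cases hr : G.Reachable u v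
  · obtain ⟨p, hp, hlen⟩ := hr.exists_path_of_dist
    exact hlen ▸ hp.length_lt.le
  · simp [dist_eq_zero_of_not_reachable hr]

lemma filter_pos_dist_eq_erase [DecidableEq V] (hconn : G.Connected) (v : V) :
    ({x | 0 < G.dist v x} : Finset V) = univ.erase v := by
  ext x
  simp [pos_iff_ne_zero, hconn.dist_eq_zero_iff, eq_comm]

lemma card_dist_eq_one [DecidableRel G.Adj] (v : V) : #{x | G.dist v x = 1} = G.degree v := by
  rw [← card_neighborFinset_eq_degree]
  congr 1
  ext x
  simp

lemma card_pos_dist_eq (v : V) :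
    #{x | 0 < G.dist v x} = #{x | G.dist v x = 1} + #{x | 1 < G.dist v x} := by
  classical
  rw [← Finset.card_union_of_disjoint (Finset.disjoint_filter.2 fun x _ h1 h2 => by omega)]
  congr 1
  ext x
  simp only [Finset.mem_filter, Finset.mem_univ, true_and, Finset.mem_union]
  omega

lemma card_dist_le_eq_sum (v : V) (i : ℕ) :
    #{x | G.dist v x ≤ i} = ∑ j ∈ range (i + 1), #{x | G.dist v x = j} := by
  rw [Finset.card_eq_sum_card_fiberwise (f := G.dist v) (t := range (i + 1))
    fun x hx => by simpa [Nat.lt_succ_iff] using hx]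
  refine Finset.sum_congr rfl fun j hj => congrArg _ ?_
  ext x
  simp only [Finset.mem_filter, Finset.mem_univ, true_and, and_iff_right_iff_imp]
  rintro rfl
  simpa [Nat.lt_succ_iff] using hj

lemma card_lt_dist_add_card_dist_le (v : V) (i : ℕ) :
    #{x | i < G.dist v x} + #{x | G.dist v x ≤ i} = Fintype.card V := by
  simpa using Finset.card_filter_add_card_filter_not (s := univ) (fun x => i < G.dist v x)

section NoCutVertex

variable (hdel : ∀ w, ((⊤ : G.Subgraph).deleteVerts {w}).coe.Connected)
include hdel

lemma two_le_card_dist_eq {v u : V} {j : ℕ} (hj : 0 < j) (hju : j < G.dist v u) :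
    2 ≤ #{x | G.dist v x = j} := by
  obtain ⟨w, hw⟩ := exists_dist_eq_of_le hju.le
  by_contra! hlt
  have huniq : ∀ x, G.dist v x = j → x = w := fun x hx =>
    Finset.card_le_one.1 (Nat.le_of_lt_succ hlt) x (by simpa using hx) w (by simpa using hw)
  have hmem : ∀ x, x ≠ w → x ∈ ((⊤ : G.Subgraph).deleteVerts {w}).verts := fun x hx => by
    simpa using hx
  obtain ⟨W⟩ := (hdel w).preconnected ⟨v, hmem v (by rintro rfl; simp at hw; omega)⟩
    ⟨u, hmem u (by rintro rfl; omega)⟩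
  obtain ⟨x, hx, hxj⟩ := (W.map (Subgraph.hom _)).exists_mem_support_dist_eq
    (v := v) (j := j) (by simpa using hj) hju.le
  rw [Walk.support_map, List.mem_map] at hx
  obtain ⟨y, -, rfl⟩ := hx
  exact y.2.2 (huniq _ hxj)

lemma card_lt_dist_add_le_card (v : V) {i : ℕ} (hne : #{x | i < G.dist v x} ≠ 0) :
    #{x | i < G.dist v x} + (2 * i + 1) ≤ Fintype.card V := by
  obtain ⟨u, hu⟩ := Finset.card_ne_zero.1 hne
  simp only [Finset.mem_filter, Finset.mem_univ, true_and] at hu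
  have hcenter : 1 ≤ #{x | G.dist v x = 0} := Finset.card_pos.2 ⟨v, by simp⟩
  have hspheres : 2 * i ≤ ∑ j ∈ range i, #{x | G.dist v x = j + 1} := by
    simpa [mul_comm] using Finset.card_nsmul_le_sum (range i) _ 2
      fun j hj => two_le_card_dist_eq hdel (u := u) j.succ_pos (by simp at hj; omega)
  have := card_lt_dist_add_card_dist_le (G := G) v i
  rw [card_dist_le_eq_sum, Finset.sum_range_succ'] at this
  omega

end NoCutVertex

section MaxDegreeTwo

variable [DecidableEq V] [DecidableRel G.Adj] (hdeg : ∀ w, G.degree w ≤ 2)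
include hdeg

lemma card_dist_eq_succ_le (v : V) {j : ℕ} (hj : 0 < j) :
    #{x | G.dist v x = j + 1} ≤ #{x | G.dist v x = j} := by
  refine Finset.card_le_card_of_forall_subsingleton (r := fun u w => G.Adj w u) ?_ ?_
  · intro u hu
    obtain ⟨w, hwu, hw⟩ := exists_adj_dist_eq_of_dist_eq_succ (by simpa using hu)
    exact ⟨w, by simpa using hw, hwu⟩
  · intro w hw u₁ ⟨hu₁, hwu₁⟩ u₂ ⟨hu₂, hwu₂⟩
    by_contra hne
    simp only [Finset.mem_filter, Finset.mem_univ, true_and] at hw hu₁ hu₂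
    obtain ⟨p, hpw, hp⟩ := exists_adj_dist_eq_of_dist_eq_succ (G := G) (v := v) (u := w)
      (j := j - 1) (by omega)
    have hsub : {u₁, u₂, p} ⊆ G.neighborFinset w := by
      simp [Finset.insert_subset_iff, hwu₁, hwu₂, hpw.symm]
    have hcard : #{u₁, u₂, p} = 3 := by
      rw [Finset.card_eq_three]
      exact ⟨u₁, u₂, p, hne, fun h => by subst h; omega, fun h => by subst h; omega, rfl⟩
    have := Finset.card_le_card hsub
    rw [card_neighborFinset_eq_degree] at this
    have := hdeg w
    omega

lemma card_dist_eq_le_two (v : V) {j : ℕ} (hj : 0 < j) : #{x | G.dist v x = j} ≤ 2 := by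
  induction j, hj using Nat.le_induction with
  | base => exact (card_dist_eq_one v).trans_le (hdeg v)
  | succ j hj ih => exact (card_dist_eq_succ_le hdeg v hj).trans ih

lemma card_le_card_lt_dist_add (hconn : G.Connected) (v : V) (i : ℕ) :
    Fintype.card V ≤ #{x | i < G.dist v x} + (2 * i + 1) := by
  have hcenter : #{x | G.dist v x = 0} ≤ 1 :=
    Finset.card_le_one.2 fun a ha b hb => by simp_all [hconn.dist_eq_zero_iff]
  have hspheres : ∑ j ∈ range i, #{x | G.dist v x = j + 1} ≤ 2 * i := by
    simpa [mul_comm] using Finset.sum_le_card_nsmul (range i) _ 2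
      fun j _ => card_dist_eq_le_two hdeg v j.succ_pos
  have := card_lt_dist_add_card_dist_le (G := G) v i
  rw [card_dist_le_eq_sum, Finset.sum_range_succ'] at this
  omega

end MaxDegreeTwo

section Comparison

variable [DecidableEq V] {H : SimpleGraph V} [DecidableRel H.Adj]
  (hconn : G.Connected) (hdel : ∀ w, ((⊤ : G.Subgraph).deleteVerts {w}).coe.Connected)
  (hH : H.Connected) (hdegH : ∀ w, H.degree w ≤ 2)
include hdel hH hdegH

lemma card_lt_dist_le_card_lt_dist (v : V) (i : ℕ) :
    #{x | i < G.dist v x} ≤ #{x | i < H.dist v x} := by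
  by_cases h0 : #{x | i < G.dist v x} = 0
  · omega
  · have := card_lt_dist_add_le_card hdel v h0
    have := card_le_card_lt_dist_add hdegH hH v i
    omega

include hconn

lemma sum_one_div_dist_le (v : V) :
    ∑ x, (1 : ℝ) / H.dist v x ≤ ∑ x, (1 : ℝ) / G.dist v x :=
  sum_one_div_le_of_card_lt_le (dist_le_card v) (dist_le_card v)
    (by rw [filter_pos_dist_eq_erase hconn, filter_pos_dist_eq_erase hH])
    (card_lt_dist_le_card_lt_dist hdel hH hdegH v)

lemma degree_eq_of_sum_one_div_dist_eq [DecidableRel G.Adj] {v : V}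
    (heq : ∑ x, (1 : ℝ) / H.dist v x = ∑ x, (1 : ℝ) / G.dist v x) :
    G.degree v = H.degree v := by
  have hpos : #{x | 0 < G.dist v x} = #{x | 0 < H.dist v x} := by
    rw [filter_pos_dist_eq_erase hconn, filter_pos_dist_eq_erase hH]
  have hfar := card_one_lt_eq_of_sum_one_div_eq (dist_le_card v) (dist_le_card v) hpos
    (card_lt_dist_le_card_lt_dist hdel hH hdegH v) heq
  rw [card_pos_dist_eq, card_pos_dist_eq, card_dist_eq_one, card_dist_eq_one] at hpos
  omega

end Comparison

section TwoRegular

variable {W : Type*} [Fintype W] {H : SimpleGraph W}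

lemma isCycles_of_degree_eq_two [DecidableRel G.Adj] (hdeg : ∀ v, G.degree v = 2) :
    G.IsCycles := fun v _ => by
  rw [Set.ncard_eq_toFinset_card', Set.toFinset_card, card_neighborSet_eq_degree, hdeg]

lemma Connected.exists_isHamiltonianCycle [DecidableEq V] [DecidableRel G.Adj] (hconn : G.Connected)
    (hdeg : ∀ v, G.degree v = 2) (v : V) : ∃ p : G.Walk v v, p.IsHamiltonianCycle := by
  obtain ⟨w, hw⟩ := (G.degree_pos_iff_exists_adj v).1 (by rw [hdeg]; norm_num)
  obtain ⟨p, hp, hverts⟩ :=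
    (isCycles_of_degree_eq_two hdeg).exists_cycle_toSubgraph_verts_eq_connectedComponentSupp
      (c := G.connectedComponentMk v) rfl ⟨w, hw⟩
  refine ⟨p, Walk.isHamiltonianCycle_isCycle_and_isHamiltonian_tail.2
    ⟨hp, hp.isPath_tail.isHamiltonian_of_mem fun x => ?_⟩⟩
  rw [Walk.support_tail_of_not_nil _ hp.not_nil]
  by_cases hxv : x = v
  · exact hxv ▸ Walk.end_mem_tail_support hp.not_nil
  · have hx : x ∈ p.toSubgraph.verts := by
      rw [hverts, ConnectedComponent.mem_supp_iff, ConnectedComponent.eq]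
      exact hconn.preconnected x v
    rw [Walk.verts_toSubgraph, Set.mem_ofPred_eq, ← Walk.cons_tail_support] at hx
    exact (List.mem_cons.1 hx).resolve_left hxv

lemma Copy.nonempty_iso_of_degree_le [DecidableRel G.Adj] [DecidableRel H.Adj] [DecidableEq W]
    (f : Copy G H) (hcard : Fintype.card V = Fintype.card W)
    (hdeg : ∀ v, H.degree (f v) ≤ G.degree v) : Nonempty (G ≃g H) := by
  have hbij : Function.Bijective f :=
    (Fintype.bijective_iff_injective_and_card f).2 ⟨f.injective, hcard⟩
  refine ⟨⟨Equiv.ofBijective f hbij, fun {a b} => ⟨fun hab => ?_, fun hab => f.toHom.map_adj hab⟩⟩⟩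
  have himage : (G.neighborFinset a).image f = H.neighborFinset (f a) := by
    refine Finset.eq_of_subset_of_card_le (fun y hy => ?_) ?_
    · obtain ⟨x, hx, rfl⟩ := Finset.mem_image.1 hy
      simpa using f.toHom.map_adj ((mem_neighborFinset _ _ _).1 hx)
    · rw [Finset.card_image_of_injective _ hbij.1, card_neighborFinset_eq_degree,
        card_neighborFinset_eq_degree]
      exact hdeg a
  have : f b ∈ (G.neighborFinset a).image f := by simpa [himage] using hab
  rw [Finset.mem_image] at this
  obtain ⟨x, hx, hxb⟩ := this
  exact hbij.1 hxb ▸ (mem_neighborFinset _ _ _).1 hx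

lemma cycleGraph_degree_eq_two {n : ℕ} (hn : 3 ≤ n) (v : Fin n) : (cycleGraph n).degree v = 2 := by
  obtain ⟨m, rfl⟩ := Nat.exists_eq_add_of_le' hn
  exact cycleGraph_degree_three_le

lemma Connected.nonempty_iso_cycleGraph [Nonempty V] [DecidableEq V] [DecidableRel G.Adj]
    (hconn : G.Connected) (hdeg : ∀ v, G.degree v = 2) {n : ℕ} (hcard : Fintype.card V = n) :
    Nonempty (G ≃g cycleGraph n) := by
  subst hcard
  obtain ⟨p, hp⟩ := hconn.exists_isHamiltonianCycle hdeg (Classical.arbitrary V)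
  have hn : 3 ≤ Fintype.card V := hp.length_eq ▸ hp.isCycle.three_le_length
  obtain ⟨f⟩ := (cycleGraph_isContained_iff hn).2 ⟨_, p, hp.isCycle, hp.length_eq⟩
  obtain ⟨e⟩ := f.nonempty_iso_of_degree_le (Fintype.card_fin _)
    fun v => by rw [hdeg, cycleGraph_degree_eq_two hn]
  exact ⟨e.symm⟩

end TwoRegular

end SimpleGraph

lemma sum_filter_fst_lt_snd_eq_half {α : Type*} [Fintype α] [LinearOrder α] (f : α → α → ℝ)
    (hsymm : ∀ x y, f x y = f y x) (hdiag : ∀ x, f x x = 0) :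
    ∑ p ∈ univ.filter (fun p : α × α => p.1 < p.2), f p.1 p.2 = (∑ x, ∑ y, f x y) / 2 := by
  have hsplit : ∀ p : α × α,
      f p.1 p.2 = (if p.1 < p.2 then f p.1 p.2 else 0) + (if p.2 < p.1 then f p.1 p.2 else 0) := by
    rintro ⟨x, y⟩
    rcases lt_trichotomy x y with h | rfl | h
    · simp [h, h.not_gt]
    · simp [hdiag]
    · simp [h, h.not_gt]
  have hswap : ∑ p ∈ univ.filter (fun p : α × α => p.2 < p.1), f p.1 p.2 =
      ∑ p ∈ univ.filter (fun p : α × α => p.1 < p.2), f p.1 p.2 :=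
    Finset.sum_equiv (Equiv.prodComm α α) (by simp) (fun p _ => by simp [hsymm])
  have htotal : ∑ x, ∑ y, f x y = ∑ p ∈ univ.filter (fun p : α × α => p.1 < p.2), f p.1 p.2 +
      ∑ p ∈ univ.filter (fun p : α × α => p.2 < p.1), f p.1 p.2 := by
    rw [← Fintype.sum_prod_type', Finset.sum_filter, Finset.sum_filter, ← Finset.sum_add_distrib]
    exact Finset.sum_congr rfl fun p _ => hsplit p
  rw [htotal, hswap]
  ring

lemma hararyIndex_eq_sum_sum_div_two {n : ℕ} (G : SimpleGraph (Fin n)) :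
    hararyIndex G = (∑ u, ∑ v, (1 : ℝ) / G.dist u v) / 2 :=
  sum_filter_fst_lt_snd_eq_half (fun u v => (1 : ℝ) / G.dist u v)
    (fun u v => by rw [SimpleGraph.dist_comm]) (fun u => by simp)

lemma hararyIndex_eq_of_iso {n : ℕ} {G H : SimpleGraph (Fin n)} (e : G ≃g H) :
    hararyIndex G = hararyIndex H := by
  rw [hararyIndex_eq_sum_sum_div_two, hararyIndex_eq_sum_sum_div_two]
  congr 1
  exact Fintype.sum_equiv e.toEquiv _ _ fun u =>
    Fintype.sum_equiv e.toEquiv _ _ fun v => by simp [e.dist_eq]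

/-- For every 2-connected graph `G` on `n` vertices, `H(G) ≥ H(C_n)`,
with equality iff `G ≅ C_n`. -/
theorem harary_ge_of_twoConnected {n : ℕ} (G : SimpleGraph (Fin n))
    (h : TwoConnected G) :
    hararyIndex (cycleGraph n) ≤ hararyIndex G ∧
      (hararyIndex G = hararyIndex (cycleGraph n) ↔
        Nonempty (G ≃g cycleGraph n)) := by
  classical
  obtain ⟨hn, hconn, hdel⟩ := h
  have hC : (cycleGraph n).Connected := by
    obtain ⟨m, rfl⟩ := Nat.exists_eq_add_of_le' hn
    exact cycleGraph_connected
  have hdegC : ∀ v, (cycleGraph n).degree v ≤ 2 := fun v => (cycleGraph_degree_eq_two hn v).le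
  have hrow : ∀ v ∈ univ, ∑ x, (1 : ℝ) / (cycleGraph n).dist v x ≤ ∑ x, (1 : ℝ) / G.dist v x :=
    fun v _ => sum_one_div_dist_le hconn hdel hC hdegC v
  refine ⟨?_, fun heq => ?_, fun ⟨e⟩ => hararyIndex_eq_of_iso e⟩
  · rw [hararyIndex_eq_sum_sum_div_two, hararyIndex_eq_sum_sum_div_two]
    linarith [Finset.sum_le_sum hrow]
  · rw [hararyIndex_eq_sum_sum_div_two, hararyIndex_eq_sum_sum_div_two] at heq
    have hrows := (Finset.sum_eq_sum_iff_of_le hrow).1 (by linarith)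
    have hdeg : ∀ v, G.degree v = 2 := fun v =>
      (degree_eq_of_sum_one_div_dist_eq hconn hdel hC hdegC (hrows v (mem_univ v))).trans
        (cycleGraph_degree_eq_two hn v)
    have : Nonempty (Fin n) := ⟨⟨0, by omega⟩⟩
    exact hconn.nonempty_iso_cycleGraph hdeg (Fintype.card_fin n)
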